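/- The function Λ(x) = e^{−e^{−x}} is totally positive, the function Λ₁(x) = e^{−x − e^{−x}} is a Pólya frequency function, and Γ(s) = ∫_{-∞}^{∞} e^{−e^{−x}} e^{−sx} dx for all s ∈ ℂ with Re s > 0. -/

import Mathlib

/-!
Writing `Λ x = exp (-exp (-x))`, one has `Λ (x - y) = Λ x ^ exp y`, so every kernel matrix
`Λ (xⱼ - yₖ)` is a generalized Vandermonde matrix `(tⱼ ^ bₖ)` with increasing positive nodes
`tⱼ = Λ xⱼ` and increasing exponents `bₖ = exp yₖ`. Such a determinant never vanishes, since by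
Rolle's theorem a sum `∑ cₖ t ^ bₖ` of `n` terms has fewer than `n` positive zeros; as the set of
increasing exponent vectors is convex, the determinant has the sign of the ordinary Vandermonde
determinant, which is positive. Multiplying a totally positive kernel by `exp (a x)` only rescales
rows and columns, which gives total positivity of `Λ₁ = exp (-x) Λ`. The substitution `u = exp (-x)`
turns the Euler integral for `Γ` into the stated bilateral Laplace transform, and the integral of
`Λ₁` into `∫₀^∞ exp (-u) du`.
-/
open MeasureTheory Complex

/-- A measurable function `Λ : ℝ → ℝ` is totally positive if every matrix
`(Λ (x j - y k))` built from increasing nodes has nonnegative determinant. -/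
def TotallyPositive (Λ : ℝ → ℝ) : Prop :=
  Measurable Λ ∧ ∀ (n : ℕ) (x y : Fin n → ℝ), StrictMono x → StrictMono y →
    0 ≤ (Matrix.of fun j k => Λ (x j - y k)).det

/-- A Pólya frequency function: totally positive, integrable, not a.e. zero. -/
def PolyaFrequency (Λ : ℝ → ℝ) : Prop :=
  TotallyPositive Λ ∧ Integrable Λ ∧ ¬ (∀ᵐ x : ℝ, Λ x = 0)

/-- The Laguerre–Pólya class. -/
def LaguerrePolya (Ψ : ℂ → ℂ) : Prop :=
  ∃ (C δ γ : ℝ) (m : ℕ) (d : ℕ → ℝ),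
    C ≠ 0 ∧ 0 ≤ γ ∧ Summable (fun j => (d j) ^ 2) ∧ 0 < γ + ∑' j, (d j) ^ 2 ∧
    (∀ s : ℂ, Multipliable (fun j => (1 + (d j : ℂ) * s) * Complex.exp (-(d j : ℂ) * s))) ∧
    ∀ s : ℂ, Ψ s = (C : ℂ) * s ^ m * Complex.exp (-(γ : ℂ) * s ^ 2 + (δ : ℂ) * s) *
      ∏' j, ((1 + (d j : ℂ) * s) * Complex.exp (-(d j : ℂ) * s))

open Set

theorem exists_strictMono_deriv_eq_zero_of_eq_zero {n : ℕ} {f f' : ℝ → ℝ} {a : ℝ}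
    (hf : ∀ t, a < t → HasDerivAt f (f' t) t) {z : Fin (n + 1) → ℝ} (hz : StrictMono z)
    (hza : ∀ i, a < z i) (hfz : ∀ i, f (z i) = 0) :
    ∃ w : Fin n → ℝ, StrictMono w ∧ (∀ i, a < w i) ∧ ∀ i, f' (w i) = 0 := by
  have rolle (i : Fin n) : ∃ w ∈ Ioo (z i.castSucc) (z i.succ), f' w = 0 :=
    exists_hasDerivAt_eq_zero (hz i.castSucc_lt_succ)
      (fun t ht => (hf t ((hza _).trans_le ht.1)).continuousAt.continuousWithinAt)
      (by rw [hfz, hfz]) (fun t ht => hf t ((hza _).trans ht.1))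
  choose w hw hfw using rolle
  refine ⟨w, fun i j hij => ?_, fun i => (hza _).trans (hw i).1, hfw⟩
  calc w i < z i.succ := (hw i).2
    _ ≤ z j.castSucc := hz.monotone (Fin.succ_le_castSucc_iff.mpr hij)
    _ < w j := (hw j).1

theorem eq_zero_of_sum_mul_rpow_eq_zero {n : ℕ} {c b z : Fin n → ℝ} (hb : Function.Injective b)
    (hz : StrictMono z) (hz0 : ∀ i, 0 < z i) (h : ∀ i, ∑ j, c j * z i ^ b j = 0) : c = 0 := by
  induction n with
  | zero => exact Subsingleton.elim c 0
  | succ n ih =>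
    set g : ℝ → ℝ := fun t => ∑ j, c j * t ^ (b j - b 0)
    have hg (t : ℝ) (ht : 0 < t) :
        HasDerivAt g (∑ j, c j * ((b j - b 0) * t ^ (b j - b 0 - 1))) t :=
      HasDerivAt.fun_sum fun j _ =>
        (Real.hasDerivAt_rpow_const (Or.inl ht.ne')).const_mul (c j)
    have hgz (i : Fin (n + 1)) : g (z i) = 0 := by
      simp only [g, Real.rpow_sub (hz0 i), ← mul_div_assoc, ← Finset.sum_div, h i, zero_div]
    obtain ⟨w, hw, hw0, hgw⟩ := exists_strictMono_deriv_eq_zero_of_eq_zero hg hz hz0 hgz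
    have hc' : (fun j : Fin n => c j.succ * (b j.succ - b 0)) = 0 := by
      refine ih (b := fun j => b j.succ - b 0 - 1) ?_ hw hw0 fun i => ?_
      · intro j k hjk
        exact Fin.succ_injective n (hb (by simpa using hjk))
      · rw [← hgw i, Fin.sum_univ_succ, sub_self, zero_mul, mul_zero, zero_add]
        exact Finset.sum_congr rfl fun j _ => by ring
    have hc_succ (j : Fin n) : c j.succ = 0 := by
      simpa [sub_eq_zero, hb.ne (Fin.succ_ne_zero j)] using congrFun hc' j
    have hc0 : c 0 = 0 := by
      simpa [Fin.sum_univ_succ, hc_succ, (Real.rpow_pos_of_pos (hz0 0) (b 0)).ne'] using h 0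
    funext j
    exact Fin.cases hc0 hc_succ j

theorem det_rpow_ne_zero {n : ℕ} {t b : Fin n → ℝ} (ht : StrictMono t) (ht0 : ∀ i, 0 < t i)
    (hb : Function.Injective b) : (Matrix.of fun i j => t i ^ b j).det ≠ 0 := by
  intro hdet
  obtain ⟨c, hc, hMc⟩ := Matrix.exists_mulVec_eq_zero_iff.mpr hdet
  refine hc (eq_zero_of_sum_mul_rpow_eq_zero hb ht ht0 fun i => ?_)
  simpa [Matrix.mulVec, dotProduct, mul_comm] using congrFun hMc i

theorem convex_setOf_strictMono (n : ℕ) : Convex ℝ {b : Fin n → ℝ | StrictMono b} := by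
  intro a ha b hb μ ν hμ hν hμν i j hij
  have hai := ha hij
  have hbi := hb hij
  simp only [Pi.add_apply, Pi.smul_apply, smul_eq_mul]
  rcases hμ.eq_or_lt with rfl | hμ
  · simp_all
  · nlinarith

theorem det_rpow_pos {n : ℕ} {t b : Fin n → ℝ} (ht : StrictMono t) (ht0 : ∀ i, 0 < t i)
    (hb : StrictMono b) : 0 < (Matrix.of fun i j => t i ^ b j).det := by
  set D : (Fin n → ℝ) → ℝ := fun b => (Matrix.of fun i j => t i ^ b j).det
  have hD : Continuous D :=
    (continuous_matrix fun i j =>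
      continuous_const.rpow (continuous_apply j) fun _ => Or.inl (ht0 i).ne').matrix_det
  have hvandermonde : 0 < D fun j => (j : ℝ) := by
    have : D (fun j => (j : ℝ)) = (Matrix.vandermonde t).det := by
      simp only [D, Matrix.vandermonde, Real.rpow_natCast]
    rw [this, Matrix.det_vandermonde]
    exact Finset.prod_pos fun i _ => Finset.prod_pos fun j hj =>
      sub_pos.2 (ht (Finset.mem_Ioi.1 hj))
  by_contra! hneg
  obtain ⟨c, hc, hDc⟩ := (convex_setOf_strictMono n).isPreconnected.intermediate_value
    hb (Nat.strictMono_cast.comp Fin.val_strictMono) hD.continuousOn ⟨hneg, hvandermonde.le⟩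
  exact det_rpow_ne_zero ht ht0 (StrictMono.injective hc) hDc

theorem TotallyPositive.exp_mul {Λ : ℝ → ℝ} (hΛ : TotallyPositive Λ) (a : ℝ) :
    TotallyPositive fun x => Real.exp (a * x) * Λ x := by
  refine ⟨(by fun_prop : Measurable _).mul hΛ.1, fun n x y hx hy => ?_⟩
  have hsplit : (Matrix.of fun j k => Real.exp (a * (x j - y k)) * Λ (x j - y k)) =
      Matrix.of fun j k => Real.exp (a * x j) *
        (Matrix.of fun j k => Real.exp (-(a * y k)) *
          (Matrix.of fun j k => Λ (x j - y k)) j k) j k := by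
    ext j k
    simp only [Matrix.of_apply, ← mul_assoc, ← Real.exp_add]
    ring_nf
  rw [hsplit, Matrix.det_mul_column, Matrix.det_mul_row]
  have := hΛ.2 n x y hx hy
  positivity

theorem exp_neg_exp_neg_sub_eq_rpow (x y : ℝ) :
    Real.exp (-Real.exp (-(x - y))) = Real.exp (-Real.exp (-x)) ^ Real.exp y := by
  rw [← Real.exp_mul, neg_sub, sub_eq_add_neg, Real.exp_add, neg_mul, mul_comm]

theorem totallyPositive_exp_neg_exp_neg : TotallyPositive fun x => Real.exp (-Real.exp (-x)) := by
  refine ⟨by fun_prop, fun n x y hx hy => le_of_lt ?_⟩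
  simp only [exp_neg_exp_neg_sub_eq_rpow]
  refine det_rpow_pos (fun i j hij => ?_) (fun i => Real.exp_pos _) (Real.exp_strictMono.comp hy)
  gcongr
  exact hx hij

theorem image_exp_neg_univ : (fun x => Real.exp (-x)) '' univ = Ioi 0 := by
  rw [image_univ, ← Real.range_exp]
  exact neg_surjective.range_comp Real.exp

theorem hasDerivAt_exp_neg (x : ℝ) : HasDerivAt (fun x => Real.exp (-x)) (-Real.exp (-x)) x := by
  simpa using (hasDerivAt_neg x).exp

section ExpNegSubstitution

variable {E : Type*} [NormedAddCommGroup E] [NormedSpace ℝ E]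

theorem integral_exp_neg_smul_comp_exp_neg (g : ℝ → E) :
    ∫ x, Real.exp (-x) • g (Real.exp (-x)) = ∫ u in Ioi 0, g u := by
  rw [← image_exp_neg_univ, integral_image_eq_integral_abs_deriv_smul MeasurableSet.univ
    (fun x _ => (hasDerivAt_exp_neg x).hasDerivWithinAt)
    (fun x _ y _ hxy => neg_injective (Real.exp_injective hxy)), setIntegral_univ]
  simp [abs_of_pos (Real.exp_pos _)]

theorem integrable_exp_neg_smul_comp_exp_neg_iff (g : ℝ → E) :
    Integrable (fun x => Real.exp (-x) • g (Real.exp (-x))) ↔ IntegrableOn g (Ioi 0) := by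
  rw [← image_exp_neg_univ, integrableOn_image_iff_integrableOn_abs_deriv_smul MeasurableSet.univ
    (fun x _ => (hasDerivAt_exp_neg x).hasDerivWithinAt)
    (fun x _ y _ hxy => neg_injective (Real.exp_injective hxy)), integrableOn_univ]
  simp [abs_of_pos (Real.exp_pos _)]

end ExpNegSubstitution

theorem integrable_exp_neg_sub_exp_neg : Integrable fun x => Real.exp (-x - Real.exp (-x)) := by
  have hsubst := (integrable_exp_neg_smul_comp_exp_neg_iff fun u => Real.exp (-u)).2
    (by simpa using exp_neg_integrableOn_Ioi 0 one_pos)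
  simpa [← Real.exp_add, ← sub_eq_add_neg] using hsubst

theorem Complex.Gamma_eq_integral_exp_neg_exp_neg {s : ℂ} (hs : 0 < s.re) :
    Gamma s = ∫ x : ℝ, (Real.exp (-Real.exp (-x)) : ℂ) * exp (-s * x) := by
  rw [Gamma_eq_integral hs, GammaIntegral, ← integral_exp_neg_smul_comp_exp_neg]
  congr 1
  ext x
  rw [cpow_def_of_ne_zero (by exact_mod_cast (Real.exp_pos _).ne'),
    ← ofReal_log (Real.exp_pos _).le, Real.log_exp, real_smul, ofReal_exp, mul_left_comm, ← exp_add]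
  congr 2
  push_cast
  ring

/-- `Λ(x) = e^{-e^{-x}}` is totally positive, `Λ₁(x) = e^{-x - e^{-x}}` is a Pólya frequency
function, and the two-sided Laplace transform of `Λ` is the Gamma function on `Re s > 0`. -/
theorem gumbel_totallyPositive :
    TotallyPositive (fun x : ℝ => Real.exp (-Real.exp (-x))) ∧
    PolyaFrequency (fun x : ℝ => Real.exp (-x - Real.exp (-x))) ∧
    ∀ s : ℂ, 0 < s.re →
      Complex.Gamma s = ∫ x : ℝ, (Real.exp (-Real.exp (-x)) : ℂ) * Complex.exp (-s * x) := by
  refine ⟨totallyPositive_exp_neg_exp_neg, ⟨?_, integrable_exp_neg_sub_exp_neg, ?_⟩,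
    fun s hs => Complex.Gamma_eq_integral_exp_neg_exp_neg hs⟩
  · have hΛ₁ : (fun x => Real.exp (-x - Real.exp (-x))) =
        fun x => Real.exp (-1 * x) * Real.exp (-Real.exp (-x)) := by
      ext x
      rw [neg_one_mul, ← Real.exp_add, sub_eq_add_neg]
    rw [hΛ₁]
    exact totallyPositive_exp_neg_exp_neg.exp_mul (-1)
  · intro h
    obtain ⟨x, hx⟩ := h.exists
    exact (Real.exp_pos _).ne' hx
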